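/- A Legendre curve of the Heisenberg group H3 (a unit-speed curve tangent to the contact distribution ker θ³, so T = cos ψ(s) e1 + sin ψ(s) e2) is biharmonic if and only if it is a geodesic. -/

import Mathlib

noncomputable section

/-- Points of the Heisenberg group `H₃ = ℝ³`. -/
abbrev R3 := ℝ × ℝ × ℝ

/-- The left-invariant frame field `e₁ = ∂x - (y/2)∂z`. -/
def e1 : R3 → R3 := fun p => (1, 0, -p.2.1 / 2)
/-- The left-invariant frame field `e₂ = ∂y + (x/2)∂z`. -/
def e2 : R3 → R3 := fun p => (0, 1, p.1 / 2)
/-- The left-invariant frame field `e₃ = ∂z`. -/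
def e3 : R3 → R3 := fun _ => (0, 0, 1)

/-- The Heisenberg metric `g = dx² + dy² + (dz + (y/2)dx - (x/2)dy)²`. -/
def gm (p v w : R3) : ℝ :=
  v.1 * w.1 + v.2.1 * w.2.1 +
    (v.2.2 + p.2.1 / 2 * v.1 - p.1 / 2 * v.2.1) *
      (w.2.2 + p.2.1 / 2 * w.1 - p.1 / 2 * w.2.1)

/-- Lie bracket of vector fields on `ℝ³` (in coordinate components). -/
def bracket (X Y : R3 → R3) : R3 → R3 :=
  fun p => fderiv ℝ Y p (X p) - fderiv ℝ X p (Y p)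

/-- Directional derivative of a scalar function along a vector field. -/
def dd (X : R3 → R3) (f : R3 → ℝ) : R3 → ℝ := fun p => fderiv ℝ f p (X p)

/-- The Koszul expression `g(∇_X Y, Z)` characterizing the Levi-Civita connection. -/
def koszul (X Y Z : R3 → R3) : R3 → ℝ := fun p =>
  (dd X (fun q => gm q (Y q) (Z q)) p + dd Y (fun q => gm q (X q) (Z q)) p
    - dd Z (fun q => gm q (X q) (Y q)) p
    + gm p (bracket X Y p) (Z p) - gm p (bracket X Z p) (Y p)
    - gm p (bracket Y Z p) (X p)) / 2

/-- The Levi-Civita connection of the Heisenberg metric, recovered from the Koszul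
formula via the orthonormal frame `e₁, e₂, e₃`. -/
def nabla (X Y : R3 → R3) : R3 → R3 := fun p =>
  koszul X Y e1 p • e1 p + koszul X Y e2 p • e2 p + koszul X Y e3 p • e3 p

/-- Curvature operator `R(X,Y)Z = -∇_X∇_Y Z + ∇_Y∇_X Z + ∇_{[X,Y]}Z`. -/
def Rc (X Y Z : R3 → R3) : R3 → R3 := fun p =>
  -nabla X (nabla Y Z) p + nabla Y (nabla X Z) p + nabla (bracket X Y) Z p

/-- Riemann-Christoffel tensor `R(X,Y,Z,W) = g(R(X,Y)Z, W)`. -/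
def R4 (X Y Z W : R3 → R3) : R3 → ℝ := fun p => gm p (Rc X Y Z p) (W p)

/-- Ricci tensor `ρ(X,Y) = trace (Z ↦ R(X,Z)Y)`, computed in the orthonormal frame. -/
def ricci (X Y : R3 → R3) : R3 → ℝ := fun p =>
  gm p (Rc X e1 Y p) (e1 p) + gm p (Rc X e2 Y p) (e2 p) + gm p (Rc X e3 Y p) (e3 p)

/-- Components of a (coordinate) tangent vector `v` at `p` with respect to the
orthonormal frame `e₁, e₂, e₃`. -/
def fc (p v : R3) : R3 := (v.1, v.2.1, v.2.2 + p.2.1 / 2 * v.1 - p.1 / 2 * v.2.1)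

/-- Frame components of the velocity field of a curve `γ`. -/
def tv (γ : ℝ → R3) (s : ℝ) : R3 := fc (γ s) (deriv γ s)

/-- Inner product of frame components (the frame is `g`-orthonormal). -/
def dot (v w : R3) : ℝ := v.1 * w.1 + v.2.1 * w.2.1 + v.2.2 * w.2.2

/-- Cross product of frame components (the frame is orthonormal and positively oriented). -/
def cross (v w : R3) : R3 :=
  (v.2.1 * w.2.2 - v.2.2 * w.2.1, v.2.2 * w.1 - v.1 * w.2.2, v.1 * w.2.1 - v.2.1 * w.1)

/-- Covariant derivative `∇_{γ'} V` along a curve `γ` of a vector field `V` given by its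
frame components, expressed again in frame components, using the connection coefficients
of the Levi-Civita connection of the Heisenberg metric in the frame `e₁, e₂, e₃`. -/
def covD (γ : ℝ → R3) (V : ℝ → R3) : ℝ → R3 := fun s =>
  let t := tv γ s
  (deriv (fun u => (V u).1) s + (V s).2.1 * t.2.2 / 2 + (V s).2.2 * t.2.1 / 2,
   deriv (fun u => (V u).2.1) s - (V s).1 * t.2.2 / 2 - (V s).2.2 * t.1 / 2,
   deriv (fun u => (V u).2.2) s - (V s).1 * t.2.1 / 2 + (V s).2.1 * t.1 / 2)

/-- The left-invariant vector field with constant frame components `v`. -/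
def ext (v : R3) : R3 → R3 := fun p => v.1 • e1 p + v.2.1 • e2 p + v.2.2 • e3 p

/-- Pointwise curvature operator on frame components: `R` is tensorial, so its value on
vectors at `p` (given in frame components) is computed via left-invariant extensions. -/
def Rfr (p : R3) (x y z : R3) : R3 := fc p (Rc (ext x) (ext y) (ext z) p)

/-- Bitension field `τ₂(γ) = ∇_T³ T + R(T, ∇_T T) T` of a unit-speed curve, where `T`
is the unit tangent in frame components. -/
def bitension (γ T : ℝ → R3) (s : ℝ) : R3 :=
  covD γ (covD γ (covD γ T)) s + Rfr (γ s) (T s) (covD γ T s) (T s)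

/-- A curve is biharmonic iff its bitension field vanishes. -/
def Biharmonic (γ T : ℝ → R3) : Prop := ∀ s, bitension γ T s = 0

/-- Frenet data of a unit-speed curve in `H₃`: `T, N, B` are the frame components of the
Frenet frame, `k > 0` is the geodesic curvature and `τ` the geodesic torsion, satisfying
the Frenet equations `∇_T T = kN`, `∇_T N = -kT - τB`, `∇_T B = τN`, with `B = T × N`. -/
structure Frenet (γ T N B : ℝ → R3) (k τ : ℝ → ℝ) : Prop where
  smooth_γ : ContDiff ℝ (⊤ : ℕ∞) γ
  smooth_T : ContDiff ℝ (⊤ : ℕ∞) T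
  smooth_N : ContDiff ℝ (⊤ : ℕ∞) N
  smooth_B : ContDiff ℝ (⊤ : ℕ∞) B
  smooth_k : ContDiff ℝ (⊤ : ℕ∞) k
  smooth_τ : ContDiff ℝ (⊤ : ℕ∞) τ
  tangent : ∀ s, T s = tv γ s
  unit : ∀ s, dot (T s) (T s) = 1
  normal_unit : ∀ s, dot (N s) (N s) = 1
  fr1 : ∀ s, covD γ T s = k s • N s
  fr2 : ∀ s, covD γ N s = -(k s • T s) - τ s • B s
  fr3 : ∀ s, covD γ B s = τ s • N s
  binormal : ∀ s, B s = cross (T s) (N s)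


/-! ### Auxiliary lemmas -/

lemma ext_eq (v : R3) :
    ext v = fun p => (v.1, v.2.1, v.2.2 + (v.2.1 / 2 * p.1 - v.1 / 2 * p.2.1)) := by
  funext p
  simp [ext, e1, e2, e3, Prod.ext_iff, Prod.smul_def, smul_eq_mul]
  ring

lemma fderiv_ext_apply (v p w : R3) :
    fderiv ℝ (ext v) p w = (0, 0, v.2.1 / 2 * w.1 - v.1 / 2 * w.2.1) := by
  have h1 : HasFDerivAt (fun p : R3 => p.1) (ContinuousLinearMap.fst ℝ ℝ (ℝ × ℝ)) p :=
    hasFDerivAt_fst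
  have h2 : HasFDerivAt (fun p : R3 => p.2.1)
      ((ContinuousLinearMap.fst ℝ ℝ ℝ).comp (ContinuousLinearMap.snd ℝ ℝ (ℝ × ℝ))) p :=
    hasFDerivAt_snd.fst
  have h3 := ((h1.const_mul (v.2.1 / 2)).sub (h2.const_mul (v.1 / 2))).const_add v.2.2
  have h : HasFDerivAt (fun p : R3 => (v.1, v.2.1, v.2.2 + (v.2.1 / 2 * p.1 - v.1 / 2 * p.2.1))) _ p :=
    (HasFDerivAt.prodMk (hasFDerivAt_const v.1 p) (HasFDerivAt.prodMk (hasFDerivAt_const v.2.1 p) h3))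
  rw [← ext_eq v] at h
  rw [h.fderiv]
  simp [ContinuousLinearMap.prod_apply]

lemma bracket_ext (x y : R3) :
    bracket (ext x) (ext y) = ext (0, 0, x.1 * y.2.1 - x.2.1 * y.1) := by
  funext p
  simp only [bracket, fderiv_ext_apply]
  simp [ext_eq, Prod.ext_iff]
  ring

lemma gm_ext (p : R3) (v w : R3) : gm p (ext v p) (ext w p) = dot v w := by
  simp [gm, dot, ext_eq]; ring

lemma dd_gm_ext (x y z : R3) (p : R3) :
    dd (ext x) (fun q => gm q (ext y q) (ext z q)) p = 0 := by
  have : (fun q : R3 => gm q (ext y q) (ext z q)) = fun _ => dot y z := by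
    funext q; exact gm_ext q y z
  simp [dd, this]

/-- Connection coefficients of the Heisenberg metric in the frame `e₁,e₂,e₃`. -/
def Gam (x y : R3) : R3 :=
  ((x.2.1 * y.2.2 + x.2.2 * y.2.1) / 2, -(x.1 * y.2.2 + x.2.2 * y.1) / 2,
    (x.1 * y.2.1 - x.2.1 * y.1) / 2)

lemma e1_ext : e1 = ext (1, 0, 0) := by funext p; simp [ext_eq, e1]; ring
lemma e2_ext : e2 = ext (0, 1, 0) := by funext p; simp [ext_eq, e2]; ring
lemma e3_ext : e3 = ext (0, 0, 1) := by funext p; simp [ext_eq, e3]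

lemma koszul_ext (x y z : R3) (p : R3) :
    koszul (ext x) (ext y) (ext z) p =
      ((x.1 * y.2.1 - x.2.1 * y.1) * z.2.2 - (x.1 * z.2.1 - x.2.1 * z.1) * y.2.2
        - (y.1 * z.2.1 - y.2.1 * z.1) * x.2.2) / 2 := by
  simp only [koszul]
  rw [dd_gm_ext x y z p, dd_gm_ext y x z p, dd_gm_ext z x y p]
  simp only [bracket_ext, gm_ext, dot]
  ring

lemma nabla_ext (x y : R3) : nabla (ext x) (ext y) = ext (Gam x y) := by
  funext p
  show koszul (ext x) (ext y) e1 p • e1 p + koszul (ext x) (ext y) e2 p • e2 p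
      + koszul (ext x) (ext y) e3 p • e3 p = ext (Gam x y) p
  rw [e1_ext, e2_ext, e3_ext]
  simp only [koszul_ext]
  simp [ext_eq, Gam, Prod.ext_iff, Prod.smul_def, smul_eq_mul]
  ring_nf
  norm_num

lemma fc_ext (p v : R3) : fc p (ext v p) = v := by
  simp [fc, ext_eq, Prod.ext_iff]; ring

lemma Rfr_eq (p x y z : R3) :
    Rfr p x y z = -Gam x (Gam y z) + Gam y (Gam x z)
      + Gam (0, 0, x.1 * y.2.1 - x.2.1 * y.1) z := by
  have h : Rc (ext x) (ext y) (ext z) p =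
      ext (-Gam x (Gam y z) + Gam y (Gam x z)
        + Gam (0, 0, x.1 * y.2.1 - x.2.1 * y.1) z) p := by
    simp only [Rc, bracket_ext, nabla_ext]
    simp [ext_eq, Gam, Prod.ext_iff]
    ring_nf
  rw [Rfr, h, fc_ext]

/-- A Legendre curve of `H₃` (a unit-speed curve tangent to the contact distribution,
`T = cos ψ e₁ + sin ψ e₂`) is biharmonic iff it is a geodesic. -/
theorem legendre_biharmonic_iff_geodesic (γ : ℝ → R3) (ψ : ℝ → ℝ)
    (hγ : ContDiff ℝ (⊤ : ℕ∞) γ) (hψ : ContDiff ℝ (⊤ : ℕ∞) ψ)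
    (hT : ∀ s, tv γ s = (Real.cos (ψ s), Real.sin (ψ s), 0)) :
    Biharmonic γ (tv γ) ↔ ∀ s, covD γ (tv γ) s = 0 := by
  have hψd : Differentiable ℝ ψ := hψ.differentiable (by simp)
  set c : ℝ → ℝ := fun s => Real.cos (ψ s) with hc
  set sn : ℝ → ℝ := fun s => Real.sin (ψ s) with hsn
  set P : ℝ → ℝ := deriv ψ with hPdef
  set P2 : ℝ → ℝ := deriv P with hP2def
  set P3 : ℝ → ℝ := deriv P2 with hP3def
  have hPc : ContDiff ℝ (⊤ : ℕ∞) P := (contDiff_infty_iff_deriv.mp hψ).2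
  have hPd : Differentiable ℝ P := hPc.differentiable (by simp)
  have hP2c : ContDiff ℝ (⊤ : ℕ∞) P2 := (contDiff_infty_iff_deriv.mp hPc).2
  have hP2d : Differentiable ℝ P2 := hP2c.differentiable (by simp)
  have dψ : ∀ s, HasDerivAt ψ (P s) s := fun s => (hψd s).hasDerivAt
  have dP : ∀ s, HasDerivAt P (P2 s) s := fun s => (hPd s).hasDerivAt
  have dP2 : ∀ s, HasDerivAt P2 (P3 s) s := fun s => (hP2d s).hasDerivAt
  have dc : ∀ s, HasDerivAt c (-(sn s * P s)) s := by
    intro s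
    have := (Real.hasDerivAt_cos (ψ s)).comp s (dψ s)
    simpa [hc, hsn, mul_comm, Function.comp_def] using this
  have dsn : ∀ s, HasDerivAt sn (c s * P s) s := by
    intro s
    have := (Real.hasDerivAt_sin (ψ s)).comp s (dψ s)
    simpa [hc, hsn, mul_comm, Function.comp_def] using this
  have htv : tv γ = fun s => (c s, sn s, 0) := funext hT
  have hpy : ∀ s, sn s ^ 2 + c s ^ 2 = 1 := fun s => Real.sin_sq_add_cos_sq (ψ s)
  -- first covariant derivative of the tangent
  have hcov1 : covD γ (tv γ) = fun s => (-(sn s * P s), c s * P s, 0) := by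
    funext s
    rw [covD, htv]
    simp only
    rw [show (fun u => ((c u, sn u, (0:ℝ)) : R3).1) = c from rfl,
        show (fun u => ((c u, sn u, (0:ℝ)) : R3).2.1) = sn from rfl,
        show (fun u => ((c u, sn u, (0:ℝ)) : R3).2.2) = fun _ => (0:ℝ) from rfl,
        (dc s).deriv, (dsn s).deriv, deriv_const]
    simp [Prod.ext_iff]
    ring
  -- second covariant derivative
  have hcov2 : covD γ (covD γ (tv γ)) =
      fun s => (-(P2 s * sn s + P s ^ 2 * c s), P2 s * c s - P s ^ 2 * sn s, P s / 2) := by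
    funext s
    rw [covD, hcov1, htv]
    simp only
    rw [show (fun u => ((-(sn u * P u), c u * P u, (0:ℝ)) : R3).1)
          = fun u => -(sn u * P u) from rfl,
        show (fun u => ((-(sn u * P u), c u * P u, (0:ℝ)) : R3).2.1)
          = fun u => c u * P u from rfl,
        show (fun u => ((-(sn u * P u), c u * P u, (0:ℝ)) : R3).2.2)
          = fun _ => (0:ℝ) from rfl,
        HasDerivAt.deriv (f := fun u => -(sn u * P u)) (((dsn s).mul (dP s)).neg),
        HasDerivAt.deriv (f := fun u => c u * P u) ((dc s).mul (dP s)), deriv_const]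
    refine Prod.ext ?_ (Prod.ext ?_ ?_) <;> simp
    · ring
    · ring
    · linear_combination (P s / 2) * hpy s
  -- third covariant derivative
  have hcov3 : covD γ (covD γ (covD γ (tv γ))) = fun s =>
      (-(P3 s * sn s) - 3 * (P s * P2 s * c s) + P s ^ 3 * sn s + P s * sn s / 4,
       P3 s * c s - 3 * (P s * P2 s * sn s) - P s ^ 3 * c s - P s * c s / 4,
       P2 s) := by
    funext s
    rw [covD, hcov2, htv]
    simp only
    have d1 : HasDerivAt (fun u => -(P2 u * sn u + P u ^ 2 * c u))
        (-((P3 s * sn s + P2 s * (c s * P s)) +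
          ((2 : ℕ) * P s ^ 1 * P2 s * c s + P s ^ 2 * (-(sn s * P s))))) s :=
      (((dP2 s).mul (dsn s)).add (((dP s).pow 2).mul (dc s))).neg
    have d2 : HasDerivAt (fun u => P2 u * c u - P u ^ 2 * sn u)
        ((P3 s * c s + P2 s * (-(sn s * P s))) -
          ((2 : ℕ) * P s ^ 1 * P2 s * sn s + P s ^ 2 * (c s * P s))) s :=
      ((dP2 s).mul (dc s)).sub (((dP s).pow 2).mul (dsn s))
    have d3 : HasDerivAt (fun u => P u / 2) (P2 s / 2) s := (dP s).div_const 2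
    rw [show (fun u => ((-(P2 u * sn u + P u ^ 2 * c u), P2 u * c u - P u ^ 2 * sn u,
          P u / 2) : R3).1) = fun u => -(P2 u * sn u + P u ^ 2 * c u) from rfl,
        show (fun u => ((-(P2 u * sn u + P u ^ 2 * c u), P2 u * c u - P u ^ 2 * sn u,
          P u / 2) : R3).2.1) = fun u => P2 u * c u - P u ^ 2 * sn u from rfl,
        show (fun u => ((-(P2 u * sn u + P u ^ 2 * c u), P2 u * c u - P u ^ 2 * sn u,
          P u / 2) : R3).2.2) = fun u => P u / 2 from rfl,
        d1.deriv, d2.deriv, d3.deriv]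
    refine Prod.ext ?_ (Prod.ext ?_ ?_) <;> simp
    · ring
    · ring
    · linear_combination (P2 s / 2) * hpy s
  -- the curvature term
  have hR : ∀ s, Rfr (γ s) (c s, sn s, 0) (-(sn s * P s), c s * P s, 0) (c s, sn s, 0)
      = (3 * P s * sn s / 4, -(3 * P s * c s / 4), 0) := by
    intro s
    rw [Rfr_eq]
    refine Prod.ext ?_ (Prod.ext ?_ ?_) <;> simp [Gam]
    · linear_combination (3 * sn s * P s / 4) * hpy s
    · linear_combination (-(3 * c s * P s / 4)) * hpy s
  -- the bitension field
  have hbit : ∀ s, bitension γ (tv γ) s =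
      (-(P3 s * sn s) - 3 * (P s * P2 s * c s) + P s ^ 3 * sn s + P s * sn s,
       P3 s * c s - 3 * (P s * P2 s * sn s) - P s ^ 3 * c s - P s * c s,
       P2 s) := by
    intro s
    rw [bitension, hcov3, hcov1, htv]
    simp only
    rw [hR s]
    refine Prod.ext ?_ (Prod.ext ?_ ?_) <;> simp <;> ring
  constructor
  · intro h s
    have hP2z : ∀ u, P2 u = 0 := by
      intro u
      have hu := h u
      rw [hbit u] at hu
      have := congrArg (fun v : R3 => v.2.2) hu
      simpa using this
    have hP3z : P3 s = 0 := by
      have hfun : P2 = fun _ => 0 := funext hP2z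
      rw [hP3def, hfun]
      simp
    have hu := h s
    rw [hbit s] at hu
    have hb1 : -(P3 s * sn s) - 3 * (P s * P2 s * c s) + P s ^ 3 * sn s + P s * sn s = 0 := by
      have := congrArg (fun v : R3 => v.1) hu
      simpa using this
    have hb2 : P3 s * c s - 3 * (P s * P2 s * sn s) - P s ^ 3 * c s - P s * c s = 0 := by
      have := congrArg (fun v : R3 => v.2.1) hu
      simpa using this
    have key : P s * (P s ^ 2 + 1) = 0 := by
      linear_combination sn s * hb1 - c s * hb2 - (P s ^ 3 + P s - P3 s) * hpy s + hP3z
    have hPz : P s = 0 := by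
      rcases mul_eq_zero.mp key with h' | h'
      · exact h'
      · nlinarith [sq_nonneg (P s)]
    rw [hcov1]
    simp [hPz, Prod.ext_iff]
  · intro h
    have hPz : ∀ u, P u = 0 := by
      intro u
      have hu := h u
      rw [hcov1] at hu
      have e1' : -(sn u * P u) = 0 := by
        have := congrArg (fun v : R3 => v.1) hu; simpa using this
      have e2' : c u * P u = 0 := by
        have := congrArg (fun v : R3 => v.2.1) hu; simpa using this
      linear_combination (-(sn u)) * e1' + c u * e2' - P u * hpy u
    have hP2z : ∀ u, P2 u = 0 := by
      intro u
      have hfun : P = fun _ => 0 := funext hPz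
      rw [hP2def, hfun]
      simp
    have hP3z : ∀ u, P3 u = 0 := by
      intro u
      have hfun : P2 = fun _ => 0 := funext hP2z
      rw [hP3def, hfun]
      simp
    intro s
    rw [hbit s]
    simp [hPz s, hP2z s, hP3z s, Prod.ext_iff]
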